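/- Let m ≥ 2 and let M be the position consisting of one element equal to 2 together with 2m−1 elements equal to 1 (so wt(M) = 2m+1). If m is odd then SW_1(M) = 2 + B(m−1) + P(m−1), and if m is even then SW_1(M) = 2 + B(m−1) − P(m); equivalently, the 2-adic valuation of δ_1(M) is 1 + B(m−1) + P(m−1) when m is odd, and 1 + B(m−1) − P(m) when m is even. -/

import Mathlib

open Finset

/-- The weight of a subposition `S` of the position `w : I → ℕ`. -/
def wtS {I : Type*} [Fintype I] [DecidableEq I] (w : I → ℕ) (S : Finset I) : ℕ :=
  ∑ i ∈ S, w i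

/-- The Saks–Werman statistic `δ_e(w) = ∑_{S ⊆ I, ε(S) ≥ e} (-1)^{wt S}` where
`ε(S) = wt(I \ S) - wt(S)`. -/
def delta {I : Type*} [Fintype I] [DecidableEq I] (w : I → ℕ) (e : ℕ) : ℤ :=
  ∑ S ∈ Finset.univ.filter
      (fun S : Finset I => (e : ℤ) ≤ (wtS w Sᶜ : ℤ) - (wtS w S : ℤ)),
    (-1) ^ (wtS w S)

/-- The iterated statistic `δ_e^(b)`: `δ_e^(1) = δ_e` and for `b ≥ 2`,
`δ_e^(b) = ∑_{t ≥ 0} δ_{e+2t}^(b-1)`, a finite sum since `δ_d = 0` for `d > wt(I)`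
(so summing `t` over `0, …, wt(I)` suffices).  (The value at `b = 0` is junk.) -/
def deltaIt {I : Type*} [Fintype I] [DecidableEq I] (w : I → ℕ) : ℕ → ℕ → ℤ
  | 0, e => delta w e
  | 1, e => delta w e
  | (b+2), e => ∑ t ∈ Finset.range ((∑ i, w i) + 1), deltaIt w (b+1) (e + 2*t)

/-- `B m` is the number of ones in the binary expansion of `m`. -/
def binaryWeight (m : ℕ) : ℕ := (Nat.digits 2 m).count 1

/-!
Splitting the subsets of `{2, 1^(2m-1)}` according to whether they contain the `2`, `δ_1` becomes
a sum of two partial alternating sums of binomial coefficients, each of which telescopes; by the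
symmetry of Pascal's triangle they agree and `δ_1 = (-1)^m · 2 · C(2m-2, m)`. Legendre's formula
gives `v₂ C(2m-2, m) + B(2m-2) = B(m) + B(m-2)` with `B(2m-2) = B(m-1)`, and comparing `n!`
with `(n-1)!` gives `v₂(n) + B(n) = B(n-1) + 1`. Hence `v₂ δ_1 = B(m) + v₂(m-1)`, which is the
claimed value in both parities.
-/

lemma sub_one_mul_padicValNat_add_digits_sum {p n : ℕ} [Fact p.Prime] (hn : n ≠ 0) :
    (p - 1) * padicValNat p n + (p.digits n).sum = (p.digits (n - 1)).sum + 1 := by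
  obtain ⟨k, rfl⟩ := Nat.exists_eq_add_one_of_ne_zero hn
  have hfac := sub_one_mul_padicValNat_factorial (p := p) (k + 1)
  rw [Nat.factorial_succ, padicValNat.mul k.add_one_ne_zero (Nat.factorial_ne_zero k), mul_add,
    sub_one_mul_padicValNat_factorial] at hfac
  have := Nat.digit_sum_le p k
  have := Nat.digit_sum_le p (k + 1)
  rw [add_tsub_cancel_right]
  omega

lemma sub_one_mul_padicValNat_choose_add_digits_sum {p n k : ℕ} [Fact p.Prime] (h : k ≤ n) :
    (p - 1) * padicValNat p (n.choose k) + (p.digits n).sum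
      = (p.digits k).sum + (p.digits (n - k)).sum := by
  have hfac := sub_one_mul_padicValNat_factorial (p := p) n
  rw [← Nat.choose_mul_factorial_mul_factorial h,
    padicValNat.mul (mul_ne_zero (Nat.choose_pos h).ne' (Nat.factorial_ne_zero k))
      (Nat.factorial_ne_zero _),
    padicValNat.mul (Nat.choose_pos h).ne' (Nat.factorial_ne_zero k), mul_add, mul_add,
    sub_one_mul_padicValNat_factorial, sub_one_mul_padicValNat_factorial] at hfac
  have := Nat.digit_sum_le p n
  have := Nat.digit_sum_le p k
  have := Nat.digit_sum_le p (n - k)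
  omega

lemma Nat.digits_sum_two_mul (n : ℕ) : (digits 2 (2 * n)).sum = (digits 2 n).sum := by
  rcases n.eq_zero_or_pos with rfl | hn
  · rfl
  · simp [digits_base_mul one_lt_two hn]

lemma List.count_one_eq_sum_of_forall_lt_two {l : List ℕ} (hl : ∀ x ∈ l, x < 2) :
    l.count 1 = l.sum := by
  induction l with
  | nil => rfl
  | cons a t ih =>
    have ha : a < 2 := hl a List.mem_cons_self
    rw [List.count_cons, List.sum_cons, ih fun x hx ↦ hl x (List.mem_cons_of_mem a hx)]
    interval_cases a <;> simp [add_comm]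

lemma binaryWeight_eq_digits_sum (n : ℕ) : binaryWeight n = (Nat.digits 2 n).sum :=
  List.count_one_eq_sum_of_forall_lt_two fun _ hx ↦ Nat.digits_lt_base one_lt_two hx

lemma padicValNat_two_choose_add_one {m : ℕ} (hm : 2 ≤ m) :
    padicValNat 2 ((2 * m - 2).choose m) + 1 = binaryWeight m + padicValNat 2 (m - 1) := by
  have hkummer := sub_one_mul_padicValNat_choose_add_digits_sum (p := 2)
    (show m ≤ 2 * m - 2 by omega)
  have hcarry := sub_one_mul_padicValNat_add_digits_sum (p := 2) (show m - 1 ≠ 0 by omega)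
  have hdouble : (Nat.digits 2 (2 * m - 2)).sum = (Nat.digits 2 (m - 1)).sum := by
    rw [show 2 * m - 2 = 2 * (m - 1) by omega, Nat.digits_sum_two_mul]
  rw [hdouble, show 2 * m - 2 - m = m - 2 by omega] at hkummer
  rw [show m - 1 - 1 = m - 2 by omega] at hcarry
  rw [binaryWeight_eq_digits_sum]
  omega

lemma Finset.sum_powerset_filter_card_le_neg_one_pow {α : Type*} {s : Finset α} {n J : ℕ}
    (hs : #s = n + 1) (hJ : J ≤ n + 1) :
    ∑ T ∈ s.powerset with #T ≤ J, (-1 : ℤ) ^ #T = (-1) ^ J * n.choose J := by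
  rw [sum_filter, sum_powerset_apply_card (fun j ↦ if j ≤ J then (-1 : ℤ) ^ j else 0), hs,
    ← Int.alternating_sum_range_choose_eq_choose,
    ← sum_range_add_sum_Ico _ (show J + 1 ≤ n + 1 + 1 by omega)]
  have htail : ∑ j ∈ Ico (J + 1) (n + 1 + 1),
      (n + 1).choose j • (if j ≤ J then (-1 : ℤ) ^ j else 0) = 0 :=
    sum_eq_zero fun j hj ↦ by simp [show ¬j ≤ J by simp at hj; omega]
  rw [htail, add_zero]
  refine sum_congr rfl fun j hj ↦ ?_
  simp [show j ≤ J by simp at hj; omega, mul_comm]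

section Position

variable {I : Type*} [Fintype I] [DecidableEq I]

lemma delta_eq_sum_filter (w : I → ℕ) (e : ℕ) :
    delta w e = ∑ S with 2 * wtS w S + e ≤ ∑ i, w i, (-1 : ℤ) ^ wtS w S := by
  refine sum_congr (filter_congr fun S _ ↦ ?_) fun _ _ ↦ rfl
  have : wtS w Sᶜ + wtS w S = ∑ i, w i := sum_compl_add_sum S w
  omega

variable {w : I → ℕ} {z : I}

lemma wtS_eq_card_add_of_eq_two (hz : w z = 2) (h1 : ∀ i, i ≠ z → w i = 1) (S : Finset I) :
    wtS w S = #S + if z ∈ S then 1 else 0 := by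
  rw [wtS, card_eq_sum_ones, ← sum_ite_eq' S z (fun _ ↦ 1), ← sum_add_distrib]
  refine sum_congr rfl fun i _ ↦ ?_
  by_cases hi : i = z <;> simp [hi, hz, h1]

lemma sum_filter_wtS_le_neg_one_pow (hz : w z = 2) (h1 : ∀ i, i ≠ z → w i = 1) (k : ℕ) :
    ∑ S with wtS w S ≤ k + 2, (-1 : ℤ) ^ wtS w S
      = ∑ T ∈ (univ.erase z).powerset with #T ≤ k + 2, (-1 : ℤ) ^ #T
        + ∑ T ∈ (univ.erase z).powerset with #T ≤ k, (-1 : ℤ) ^ #T := by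
  have huniv : (univ : Finset I) = insert z (univ.erase z) := (insert_erase (mem_univ z)).symm
  rw [sum_filter, sum_filter, sum_filter, ← powerset_univ]
  conv_lhs => rw [huniv, sum_powerset_insert (notMem_erase z univ)]
  congr 1 <;> refine sum_congr rfl fun T hT ↦ ?_
  · have hzT : z ∉ T := fun h ↦ notMem_erase z univ (mem_powerset.1 hT h)
    simp [wtS_eq_card_add_of_eq_two hz h1, hzT]
  · have hzT : z ∉ T := fun h ↦ notMem_erase z univ (mem_powerset.1 hT h)
    simp [wtS_eq_card_add_of_eq_two hz h1, card_insert_of_notMem hzT, pow_add]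

end Position

lemma delta_one_eq_of_two_ones {m : ℕ} (hm : 2 ≤ m)
    (w : Fin (2 * m) → ℕ) (hw : ∀ x : Fin (2 * m), w x = if (x : ℕ) = 0 then 2 else 1) :
    delta w 1 = (-1) ^ m * (2 * (2 * m - 2).choose m) := by
  obtain ⟨k, rfl⟩ : ∃ k, m = k + 2 := ⟨m - 2, by omega⟩
  set z : Fin (2 * (k + 2)) := ⟨0, by omega⟩
  have hz : w z = 2 := by simp [hw, z]
  have h1 : ∀ i, i ≠ z → w i = 1 := fun i hi ↦ by rw [hw, if_neg fun h ↦ hi (Fin.ext h)]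
  have htotal : ∑ i, w i = 2 * (k + 2) + 1 := by
    have := wtS_eq_card_add_of_eq_two hz h1 univ
    simp only [wtS, card_univ, Fintype.card_fin, mem_univ, if_true] at this
    exact this
  have hcard : #(univ.erase z) = 2 * k + 2 + 1 := by
    rw [card_erase_of_mem (mem_univ z), card_univ, Fintype.card_fin]
    omega
  have hfilter : ∑ S with 2 * wtS w S + 1 ≤ ∑ i, w i, (-1 : ℤ) ^ wtS w S
      = ∑ S with wtS w S ≤ k + 2, (-1 : ℤ) ^ wtS w S :=
    sum_congr (filter_congr fun S _ ↦ by omega) fun _ _ ↦ rfl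
  rw [delta_eq_sum_filter, hfilter, sum_filter_wtS_le_neg_one_pow hz h1,
    sum_powerset_filter_card_le_neg_one_pow hcard (by omega),
    sum_powerset_filter_card_le_neg_one_pow hcard (by omega),
    show 2 * (k + 2) - 2 = 2 * k + 2 by omega,
    Nat.choose_symm_of_eq_add (show 2 * k + 2 = k + (k + 2) by ring)]
  ring

/-- for the position `{2, 1^{2m−1}}` (with `m ≥ 2`), the 2-adic valuation
of `δ_1` is `1 + B(m−1) + P(m−1)` if `m` is odd, and `1 + B(m−1) − P(m)` if `m` is even;
equivalently `SW_1 = 2 + B(m−1) + P(m−1)` resp. `2 + B(m−1) − P(m)`. -/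
theorem emultiplicity_delta_two_ones
    (m : ℕ) (hm : 2 ≤ m)
    (w : Fin (2 * m) → ℕ) (hw : ∀ x : Fin (2 * m), w x = if (x : ℕ) = 0 then 2 else 1) :
    (Odd m →
      emultiplicity (2 : ℤ) (delta w 1)
        = ((1 + binaryWeight (m - 1) + padicValNat 2 (m - 1) : ℕ) : ℕ∞))
    ∧ (Even m →
      emultiplicity (2 : ℤ) (delta w 1)
        = ((1 + binaryWeight (m - 1) - padicValNat 2 m : ℕ) : ℕ∞)) := by
  have hδ : emultiplicity (2 : ℤ) (delta w 1)
      = ((binaryWeight m + padicValNat 2 (m - 1) : ℕ) : ℕ∞) := by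
    have hC : (2 * m - 2).choose m ≠ 0 := (Nat.choose_pos (by omega)).ne'
    have habs : (delta w 1).natAbs = 2 * (2 * m - 2).choose m := by
      simp [delta_one_eq_of_two_ones hm w hw, Int.natAbs_mul, Int.natAbs_pow]
    have := Int.emultiplicity_natAbs 2 (delta w 1)
    rw [Nat.cast_ofNat] at this
    rw [← this, habs, ← padicValNat_eq_emultiplicity (by positivity),
      padicValNat.mul two_ne_zero hC, padicValNat.self one_lt_two, add_comm, padicValNat_two_choose_add_one hm]
  have hcarry := sub_one_mul_padicValNat_add_digits_sum (p := 2) (show m ≠ 0 by omega)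
  rw [← binaryWeight_eq_digits_sum, ← binaryWeight_eq_digits_sum] at hcarry
  refine ⟨fun hodd ↦ ?_, fun heven ↦ ?_⟩
  · have hv : padicValNat 2 m = 0 :=
      padicValNat.eq_zero_of_not_dvd fun h ↦ by obtain ⟨k, hk⟩ := hodd; omega
    rw [hδ]
    congr 1
    omega
  · have hv : padicValNat 2 (m - 1) = 0 :=
      padicValNat.eq_zero_of_not_dvd fun h ↦ by obtain ⟨k, hk⟩ := heven; omega
    rw [hδ]
    congr 1
    omega
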